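/- Under the same hypotheses on (G_{y,x}), the limit function H satisfies, for any y and any two covariate sequences x, x̄: |H(y_{t−1}^−, x_t^−) − H(y_{t−1}^−, x̄_t^−)| ≤ Σ_{j=0}^∞ κ^j Σ_{i=1}^r L^i |x_{t−jr−i+1} − x̄_{t−jr−i+1}|. -/

import Mathlib

/-!
Split the backward composition into blocks of `r` maps. Going one block further back changes the
difference of the two iterates by at most `κ` times the previous difference (contraction of the
block, same `y`), plus the effect of swapping the `r` covariates of the new block, which a
telescoping Lipschitz estimate bounds by `∑ᵢ Lⁱ⁺¹ ‖xₜ₋ᵢ - x̄ₜ₋ᵢ‖`. The limits are read off along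
the subsequence `m r`; the weighted summability of `x` and `x̄` makes the resulting series converge.
-/

open Classical

/-- Backward iterates of the observation-driven recursion:
`backIter G y x t n z = G (y (t-1)) (x t) (G (y (t-2)) (x (t-1)) (… (G (y (t-n)) (x (t-n+1)) z)))`,
the composition of the `n` maps `G_{y_{t-1},x_t} ∘ ⋯ ∘ G_{y_{t-n},x_{t-n+1}}` applied to `z`. -/
def backIter {E V W : Type*} (G : E → V → W → W) (y : ℤ → E) (x : ℤ → V) :
    ℤ → ℕ → W → W
  | _, 0, z => z
  | t, n + 1, z => G (y (t - 1)) (x t) (backIter G y x (t - 1) n z)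

open Finset Filter Topology

lemma summable_pow_mul_sum_range_block {κ : ℝ} (hκ0 : 0 < κ) (hκ1 : κ ≤ 1) {r : ℕ}
    (hr : 0 < r) {a : ℕ → ℝ} (ha : ∀ n, 0 ≤ a n)
    (hsum : Summable fun n : ℕ => κ ^ ((n : ℝ) / r) * a n) :
    Summable fun j : ℕ => κ ^ j * ∑ i ∈ range r, a (j * r + i) := by
  have : NeZero r := ⟨hr.ne'⟩
  set b : ℕ → ℝ := fun n => κ ^ ((n : ℝ) / r) * a n
  have hb : 0 ≤ b := fun n => mul_nonneg (by positivity) (ha n)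
  have hblocks : Summable fun j : ℕ => ∑ i ∈ range r, b (j * r + i) := by
    have hprod : Summable fun p : ℕ × Fin r => b (p.1 * r + p.2) :=
      (Nat.divModEquiv r).symm.summable_iff.mpr hsum
    refine ((summable_prod_of_nonneg fun p => hb _).mp hprod).2.congr fun j => ?_
    rw [tsum_fintype, Fin.sum_univ_eq_sum_range (fun i => b (j * r + i))]
  have hpow : ∀ j i : ℕ, i < r → κ ^ j ≤ κ⁻¹ * κ ^ (((j * r + i : ℕ) : ℝ) / r) := by
    intro j i hi
    have hexp : ((j * r + i : ℕ) : ℝ) / r ≤ ((j + 1 : ℕ) : ℝ) := by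
      rw [div_le_iff₀ (by exact_mod_cast hr)]
      exact_mod_cast (by nlinarith : j * r + i ≤ (j + 1) * r)
    rw [le_inv_mul_iff₀ hκ0, ← pow_succ']
    exact_mod_cast Real.rpow_le_rpow_of_exponent_ge hκ0 hκ1 hexp
  refine (hblocks.mul_left κ⁻¹).of_nonneg_of_le
    (fun j => mul_nonneg (by positivity) (sum_nonneg fun i _ => ha _)) fun j => ?_
  rw [mul_sum, mul_sum]
  refine sum_le_sum fun i hi => ?_
  rw [← mul_assoc]
  exact mul_le_mul_of_nonneg_right (hpow j i (mem_range.mp hi)) (ha _)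

lemma tendsto_mul_const_of_tendsto_add_one {α : Type*} {l : Filter α} (u : ℕ → α) {r : ℕ}
    (hr : 0 < r) (h : Tendsto (fun n => u (n + 1)) atTop l) :
    Tendsto (fun m => u (m * r)) atTop l :=
  ((tendsto_add_atTop_iff_nat 1).1 h).comp (tendsto_id.atTop_mul_const' hr)

section iterates

variable {E V W : Type*} (G : E → V → W → W) (y : ℤ → E)

lemma backIter_add (x : ℤ → V) (a b : ℕ) (t : ℤ) (z : W) :
    backIter G y x t (a + b) z = backIter G y x t a (backIter G y x (t - a) b z) := by
  induction a generalizing t with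
  | zero => simp [backIter]
  | succ a ih =>
    rw [Nat.add_right_comm, backIter, ih, backIter, Nat.cast_succ, sub_add_eq_sub_sub_swap]

variable [NormedAddCommGroup V] [NormedAddCommGroup W] {G} {L : ℝ}

lemma norm_backIter_sub_backIter_le (hL : 0 ≤ L)
    (hLip : ∀ e a a' (z z' : W), ‖G e a z - G e a' z'‖ ≤ L * (‖a - a'‖ + ‖z - z'‖))
    (x x' : ℤ → V) (n : ℕ) (t : ℤ) (z : W) :
    ‖backIter G y x t n z - backIter G y x' t n z‖ ≤
      ∑ i ∈ range n, L ^ (i + 1) * ‖x (t - i) - x' (t - i)‖ := by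
  induction n generalizing t with
  | zero => simp [backIter]
  | succ n ih =>
    calc ‖backIter G y x t (n + 1) z - backIter G y x' t (n + 1) z‖
        ≤ L * (‖x t - x' t‖ + ‖backIter G y x (t - 1) n z - backIter G y x' (t - 1) n z‖) :=
          hLip _ _ _ _ _
      _ ≤ L * (‖x t - x' t‖ + ∑ i ∈ range n, L ^ (i + 1) * ‖x (t - 1 - i) - x' (t - 1 - i)‖) := by
          gcongr
          exact ih (t - 1)
      _ = ∑ i ∈ range (n + 1), L ^ (i + 1) * ‖x (t - i) - x' (t - i)‖ := by
          rw [sum_range_succ', mul_add, mul_sum, add_comm]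
          congr 1
          · refine sum_congr rfl fun i _ => ?_
            rw [Nat.cast_succ, ← sub_sub, sub_right_comm t, pow_succ' L (i + 1), mul_assoc]
          · simp

lemma norm_backIter_mul_sub_backIter_mul_le (hL : 0 ≤ L)
    (hLip : ∀ e a a' (z z' : W), ‖G e a z - G e a' z'‖ ≤ L * (‖a - a'‖ + ‖z - z'‖))
    {κ : ℝ} (hκ : 0 ≤ κ) {r : ℕ} (x x' : ℤ → V)
    (hcontract : ∀ t (z z' : W), ‖backIter G y x t r z - backIter G y x t r z'‖ ≤ κ * ‖z - z'‖)
    (m : ℕ) (s : ℤ) (z : W) :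
    ‖backIter G y x s (m * r) z - backIter G y x' s (m * r) z‖ ≤
      ∑ j ∈ range m, κ ^ j *
        ∑ i ∈ range r, L ^ (i + 1) * ‖x (s - j * r - i) - x' (s - j * r - i)‖ := by
  induction m generalizing s with
  | zero => simp [backIter]
  | succ m ih =>
    rw [Nat.succ_mul, Nat.add_comm, backIter_add, backIter_add]
    set w := backIter G y x (s - r) (m * r) z
    set w' := backIter G y x' (s - r) (m * r) z
    have hidx : ∀ j : ℕ, s - ((j + 1 : ℕ) : ℤ) * r = s - r - j * r := fun j => by push_cast; ring
    calc ‖backIter G y x s r w - backIter G y x' s r w'‖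
        ≤ ‖backIter G y x s r w - backIter G y x s r w'‖ +
            ‖backIter G y x s r w' - backIter G y x' s r w'‖ :=
          norm_sub_le_norm_sub_add_norm_sub _ _ _
      _ ≤ κ * ‖w - w'‖ + ∑ i ∈ range r, L ^ (i + 1) * ‖x (s - i) - x' (s - i)‖ :=
          add_le_add (hcontract _ _ _) (norm_backIter_sub_backIter_le y hL hLip x x' r s w')
      _ ≤ κ * ∑ j ∈ range m, κ ^ j *
              ∑ i ∈ range r, L ^ (i + 1) * ‖x (s - r - j * r - i) - x' (s - r - j * r - i)‖ +
            ∑ i ∈ range r, L ^ (i + 1) * ‖x (s - i) - x' (s - i)‖ := by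
          gcongr
          exact ih (s - r)
      _ = ∑ j ∈ range (m + 1), κ ^ j *
            ∑ i ∈ range r, L ^ (i + 1) * ‖x (s - j * r - i) - x' (s - j * r - i)‖ := by
          rw [sum_range_succ', mul_sum]
          congr 1
          · refine sum_congr rfl fun j _ => ?_
            rw [hidx, pow_succ', mul_assoc]
          · simp

end iterates

lemma summable_pow_mul_sum_norm_sub {V : Type*} [NormedAddCommGroup V] {κ L : ℝ} (hκ0 : 0 < κ)
    (hκ1 : κ ≤ 1) (hL : 1 ≤ L) {r : ℕ} (hr : 0 < r) (x x' : ℤ → V) (t : ℤ)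
    (hx : Summable fun i : ℕ => κ ^ ((i : ℝ) / r) * ‖x (t - i)‖)
    (hx' : Summable fun i : ℕ => κ ^ ((i : ℝ) / r) * ‖x' (t - i)‖) :
    Summable fun j : ℕ => κ ^ j *
      ∑ i ∈ range r, L ^ (i + 1) * ‖x (t - j * r - i) - x' (t - j * r - i)‖ := by
  have hdiff : Summable fun n : ℕ => κ ^ ((n : ℝ) / r) * ‖x (t - n) - x' (t - n)‖ := by
    refine (hx.add hx').of_nonneg_of_le (fun n => by positivity) fun n => ?_
    rw [← mul_add]
    gcongr
    exact norm_sub_le _ _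
  refine ((summable_pow_mul_sum_range_block hκ0 hκ1 hr (fun n => norm_nonneg _) hdiff).mul_left
    (L ^ r)).of_nonneg_of_le (fun j => by positivity) fun j => ?_
  rw [mul_left_comm, mul_sum _ _ (L ^ r)]
  gcongr with i hi
  · exact mem_range.mp hi
  · rw [show t - j * r - i = t - ((j * r + i : ℕ) : ℤ) by push_cast; ring]

theorem stmt14_general {E V W : Type*} [NormedAddCommGroup V] [NormedAddCommGroup W]
    (G : E → V → W → W) (L : ℝ) (hL : 1 ≤ L)
    (hLip : ∀ (y y' : E) (x x' : V) (z z' : W),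
      ‖G y x z - G y' x' z'‖ ≤
        L * ((if y = y' then (0 : ℝ) else 1) + ‖x - x'‖ + ‖z - z'‖))
    (r : ℕ) (hr : 0 < r) (κ : ℝ) (hκ : κ ∈ Set.Ioo (0 : ℝ) 1)
    (hcontract : ∀ (y : ℤ → E) (x : ℤ → V) (t : ℤ) (z z' : W),
      ‖backIter G y x t r z - backIter G y x t r z'‖ ≤ κ * ‖z - z'‖)
    (y : ℤ → E) (x x' : ℤ → V)
    (hx : ∀ t : ℤ, Summable fun i : ℕ => κ ^ ((i : ℝ) / (r : ℝ)) * ‖x (t - i)‖)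
    (hx' : ∀ t : ℤ, Summable fun i : ℕ => κ ^ ((i : ℝ) / (r : ℝ)) * ‖x' (t - i)‖)
    (t : ℤ) (lam lam' : W)
    (hlam : Filter.Tendsto (fun n : ℕ => backIter G y x t (n + 1) 0)
      Filter.atTop (nhds lam))
    (hlam' : Filter.Tendsto (fun n : ℕ => backIter G y x' t (n + 1) 0)
      Filter.atTop (nhds lam')) :
    ‖lam - lam'‖ ≤
      ∑' j : ℕ, κ ^ j *
        ∑ i ∈ Finset.range r, L ^ (i + 1) * ‖x (t - j * r - i) - x' (t - j * r - i)‖ := by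
  obtain ⟨hκ0, hκ1⟩ := hκ
  have hLip_fixed : ∀ e a a' (z z' : W), ‖G e a z - G e a' z'‖ ≤ L * (‖a - a'‖ + ‖z - z'‖) :=
    fun e a a' z z' => by simpa using hLip e e a a' z z'
  have hlim : Tendsto (fun m : ℕ => ‖backIter G y x t (m * r) 0 - backIter G y x' t (m * r) 0‖)
      atTop (𝓝 ‖lam - lam'‖) :=
    ((tendsto_mul_const_of_tendsto_add_one (fun n => backIter G y x t n 0) hr hlam).sub
      (tendsto_mul_const_of_tendsto_add_one (fun n => backIter G y x' t n 0) hr hlam')).norm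
  refine le_of_tendsto' hlim fun m => ?_
  have hsum := summable_pow_mul_sum_norm_sub (L := L) hκ0 hκ1.le hL hr x x' t (hx t) (hx' t)
  have hblock := norm_backIter_mul_sub_backIter_mul_le y (zero_le_one.trans hL) hLip_fixed hκ0.le
    x x' (hcontract y x) m t 0
  refine hblock.trans (hsum.sum_le_tsum _ fun j _ => ?_)
  positivity

/-- Lipschitz dependence of `H(y_{t-1}^-, ·)` on the covariate path:
`‖H(y_{t-1}^-, x_t^-) - H(y_{t-1}^-, x̄_t^-)‖ ≤
  Σ_{j=0}^∞ κ^j Σ_{i=1}^r L^i ‖x_{t-jr-i+1} - x̄_{t-jr-i+1}‖`. -/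
theorem stmt14 {E V W : Type*} [NormedAddCommGroup V] [NormedAddCommGroup W]
    [CompleteSpace W]
    (G : E → V → W → W) (L : ℝ) (hL : 1 ≤ L)
    (hLip : ∀ (y y' : E) (x x' : V) (z z' : W),
      ‖G y x z - G y' x' z'‖ ≤
        L * ((if y = y' then (0 : ℝ) else 1) + ‖x - x'‖ + ‖z - z'‖))
    (r : ℕ) (hr : 0 < r) (κ : ℝ) (hκ : κ ∈ Set.Ioo (0 : ℝ) 1)
    (hcontract : ∀ (y : ℤ → E) (x : ℤ → V) (t : ℤ) (z z' : W),
      ‖backIter G y x t r z - backIter G y x t r z'‖ ≤ κ * ‖z - z'‖)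
    (y : ℤ → E) (x x' : ℤ → V)
    (hx : ∀ t : ℤ, Summable fun i : ℕ => κ ^ ((i : ℝ) / (r : ℝ)) * ‖x (t - i)‖)
    (hx' : ∀ t : ℤ, Summable fun i : ℕ => κ ^ ((i : ℝ) / (r : ℝ)) * ‖x' (t - i)‖)
    (t : ℤ) (lam lam' : W)
    (hlam : Filter.Tendsto (fun n : ℕ => backIter G y x t (n + 1) 0)
      Filter.atTop (nhds lam))
    (hlam' : Filter.Tendsto (fun n : ℕ => backIter G y x' t (n + 1) 0)
      Filter.atTop (nhds lam')) :
    ‖lam - lam'‖ ≤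
      ∑' j : ℕ, κ ^ j *
        ∑ i ∈ Finset.range r, L ^ (i + 1) * ‖x (t - j * r - i) - x' (t - j * r - i)‖ :=
  stmt14_general G L hL hLip r hr κ hκ hcontract y x x' hx hx' t lam lam' hlam hlam'
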